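/- arXiv:2603.10642 — 4 statements merged into one kernel-verified Lean document; each statement's English description precedes it below -/
import Mathlib

section
/- Let $0 \le \epsilon < 1$, and let $a, \overline{a}, b, \overline{b}$ be reals satisfying $|a - \overline{a}| \le \epsilon \max(1,|a|)$, $|b - \overline{b}| \le \epsilon \max(1,|b|)$, and $b \le a$. Then $(a - b) - (\overline{a} - \overline{b}) \le \frac{2\epsilon}{1-\epsilon} \max(1, \overline{a}, -\overline{b})$. -/
lemma helper_stmt4 (ε t xbar M : ℝ) (h0 : 0 ≤ ε) (h1 : ε < 1)
    (ht : t ≤ xbar + ε * max 1 t) (hM : max 1 xbar ≤ M) :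
    ε * max 1 t ≤ ε / (1 - ε) * M := by
  have h1t : (1:ℝ) ≤ max 1 t := le_max_left _ _
  have hx : (1:ℝ) ≤ max 1 xbar := le_max_left _ _
  have hxb : xbar ≤ max 1 xbar := le_max_right _ _
  have hm : max 1 t ≤ max 1 xbar + ε * max 1 t := by
    apply max_le
    · nlinarith
    · nlinarith
  have hε : (0:ℝ) < 1 - ε := by linarith
  rw [div_mul_eq_mul_div, le_div_iff₀ hε]
  nlinarith

theorem stmt_4 (ε a abar b bbar : ℝ) (h0 : 0 ≤ ε) (h1 : ε < 1)
    (ha : |a - abar| ≤ ε * max 1 |a|) (hb : |b - bbar| ≤ ε * max 1 |b|)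
    (hba : b ≤ a) :
    (a - b) - (abar - bbar) ≤ (2 * ε / (1 - ε)) * max 1 (max abar (-bbar)) := by
  set M := max 1 (max abar (-bbar)) with hMdef
  have hMa : max 1 abar ≤ M := max_le (le_max_left _ _)
    (le_trans (le_max_left _ _) (le_max_right _ _))
  have hMb : max 1 (-bbar) ≤ M := max_le (le_max_left _ _)
    (le_trans (le_max_right _ _) (le_max_right _ _))
  have ha1 := abs_le.mp ha
  have hb1 := abs_le.mp hb
  have key1 : a - abar ≤ ε / (1 - ε) * M := by
    rcases le_or_gt 0 a with hpos | hneg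
    · rw [abs_of_nonneg hpos] at ha1
      have := helper_stmt4 ε a abar M h0 h1 (by linarith [ha1.2]) hMa
      linarith [ha1.2]
    · have hbneg : b < 0 := lt_of_le_of_lt hba hneg
      rw [abs_of_neg hneg] at ha1
      rw [abs_of_neg hbneg] at hb1
      have hmono : max 1 (-a) ≤ max 1 (-b) := max_le_max le_rfl (by linarith)
      have h2 : ε * max 1 (-a) ≤ ε * max 1 (-b) := mul_le_mul_of_nonneg_left hmono h0
      have := helper_stmt4 ε (-b) (-bbar) M h0 h1 (by linarith [hb1.1]) hMb
      linarith [ha1.2]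
  have key2 : bbar - b ≤ ε / (1 - ε) * M := by
    rcases le_or_gt b 0 with hneg | hpos
    · rw [abs_of_nonpos hneg] at hb1
      have := helper_stmt4 ε (-b) (-bbar) M h0 h1 (by linarith [hb1.1]) hMb
      linarith [hb1.1]
    · have hapos : 0 < a := lt_of_lt_of_le hpos hba
      rw [abs_of_pos hpos] at hb1
      rw [abs_of_pos hapos] at ha1
      have hmono : max 1 b ≤ max 1 a := max_le_max le_rfl hba
      have h2 : ε * max 1 b ≤ ε * max 1 a := mul_le_mul_of_nonneg_left hmono h0
      have := helper_stmt4 ε a abar M h0 h1 (by linarith [ha1.2]) hMa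
      linarith [hb1.1]
  have : (2 * ε / (1 - ε)) * M = ε / (1 - ε) * M + ε / (1 - ε) * M := by ring
  linarith
end

section
/- Let $0 \le \epsilon < 1$, $\Delta := \frac{2\epsilon}{1-\epsilon}\max(1, \overline{a}, -\overline{b})$, and suppose reals $a, \overline{a}, b, \overline{b}$ satisfy $|a - \overline{a}| \le \epsilon \max(1,|a|)$, $|b - \overline{b}| \le \epsilon \max(1,|b|)$, and $\overline{a} - \overline{b} \ge -\Delta$. Then $(\overline{a} - \overline{b}) - (a - b) \le \frac{1+\epsilon}{1-\epsilon} \Delta$. -/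
private lemma aux_max_bound (ε x xbar : ℝ) (h0 : 0 ≤ ε) (h1 : ε < 1)
    (h : |x - xbar| ≤ ε * max 1 |x|) :
    (1 - ε) * max 1 |x| ≤ max 1 |xbar| := by
  rcases le_or_gt (|x|) 1 with hle | hgt
  · have : max 1 |x| = 1 := max_eq_left hle
    rw [this]
    have h2 : (1:ℝ) ≤ max 1 |xbar| := le_max_left _ _
    nlinarith
  · have hm : max 1 |x| = |x| := max_eq_right hgt.le
    rw [hm]
    have htri : |x| - |xbar| ≤ |x - xbar| := by
      have := abs_sub_abs_le_abs_sub x xbar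
      linarith
    have h2 : |xbar| ≤ max 1 |xbar| := le_max_right _ _
    rw [hm] at h
    nlinarith

theorem stmt_5 (ε a abar b bbar : ℝ) (h0 : 0 ≤ ε) (h1 : ε < 1)
    (Δ : ℝ) (hΔ : Δ = (2 * ε / (1 - ε)) * max 1 (max abar (-bbar)))
    (ha : |a - abar| ≤ ε * max 1 |a|) (hb : |b - bbar| ≤ ε * max 1 |b|)
    (harmijo : abar - bbar ≥ -Δ) :
    (abar - bbar) - (a - b) ≤ ((1 + ε) / (1 - ε)) * Δ := by
  set M := max 1 (max abar (-bbar)) with hM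
  have hε : (0:ℝ) < 1 - ε := by linarith
  have hM1 : (1:ℝ) ≤ M := le_max_left _ _
  have hMa : abar ≤ M := le_trans (le_max_left _ _) (le_max_right _ _)
  have hMb : -bbar ≤ M := le_trans (le_max_right _ _) (le_max_right _ _)
  have hΔ0 : 0 ≤ Δ := by
    rw [hΔ]
    have : 0 ≤ 2 * ε / (1 - ε) := by positivity
    nlinarith
  -- |abar| ≤ M + Δ and |bbar| ≤ M + Δ
  have habar : max 1 |abar| ≤ M + Δ := by
    have h1' : |abar| ≤ M + Δ := by
      rw [abs_le]; constructor <;> nlinarith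
    have : (1:ℝ) ≤ M + Δ := by linarith
    exact max_le this h1'
  have hbbar : max 1 |bbar| ≤ M + Δ := by
    have h1' : |bbar| ≤ M + Δ := by
      rw [abs_le]; constructor <;> nlinarith
    have : (1:ℝ) ≤ M + Δ := by linarith
    exact max_le this h1'
  have hA := aux_max_bound ε a abar h0 h1 ha
  have hB := aux_max_bound ε b bbar h0 h1 hb
  -- main inequality
  have ha' : abar - a ≤ ε * max 1 |a| := by
    have := abs_le.mp ha
    cases abs_cases (a - abar) with
    | inl h => linarith [h.1, ha, abs_nonneg (a-abar)]
    | inr h => linarith [ha]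
  have ha'' : abar - a ≤ ε * max 1 |a| := ha'
  have hb' : b - bbar ≤ ε * max 1 |b| := by
    cases abs_cases (b - bbar) with
    | inl h => linarith [hb]
    | inr h => linarith [hb]
  have hma : (0:ℝ) ≤ max 1 |a| := by positivity
  have hmb : (0:ℝ) ≤ max 1 |b| := by positivity
  have key : abar - a + (b - bbar) ≤ (ε / (1-ε)) * (2 * (M + Δ)) := by
    have hA' : ε * max 1 |a| ≤ (ε / (1-ε)) * max 1 |abar| := by
      rw [div_mul_eq_mul_div, le_div_iff₀ hε]
      nlinarith
    have hB' : ε * max 1 |b| ≤ (ε / (1-ε)) * max 1 |bbar| := by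
      rw [div_mul_eq_mul_div, le_div_iff₀ hε]
      nlinarith
    have hε' : 0 ≤ ε / (1-ε) := by positivity
    nlinarith [mul_le_mul_of_nonneg_left habar hε', mul_le_mul_of_nonneg_left hbbar hε']
  have hΔeq : Δ * (1 - ε) = 2 * ε * M := by
    rw [hΔ]; field_simp
  have goal_eq : ((1 + ε) / (1 - ε)) * Δ = Δ + (ε / (1-ε)) * (2 * Δ) := by
    field_simp; ring
  have : (ε / (1-ε)) * (2 * M) = Δ := by
    rw [div_mul_eq_mul_div, div_eq_iff hε.ne']
    nlinarith
  calc (abar - bbar) - (a - b) = abar - a + (b - bbar) := by ring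
    _ ≤ (ε / (1-ε)) * (2 * (M + Δ)) := key
    _ = (ε / (1-ε)) * (2 * M) + (ε / (1-ε)) * (2 * Δ) := by ring
    _ = Δ + (ε / (1-ε)) * (2 * Δ) := by rw [this]
    _ = ((1 + ε) / (1 - ε)) * Δ := goal_eq.symm
end

section
/- Let $(g_k)_{k \in K^+}$ be a finite family of vectors indexed by a finite set $K^+ \subseteq \mathbb{N}$, let $\varsigma > 0$, $0 < \theta_{\min} \le \theta_k$ for each $k$, and define $\mu_k = \theta_k \sqrt{\varsigma + \sum_{j \in K^+, j \le k} \|g_j\|^2}$. Then $\sum_{k \in K^+} \frac{\|g_k\|^2}{\mu_k^2} \le \frac{1}{\theta_{\min}^2}\left(\ln\left(\varsigma + \sum_{k \in K^+}\|g_k\|^2\right) - \ln \varsigma\right)$. -/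
/-! Each term `‖g_k‖² / μ_k²` is at most `θ_min⁻² · d / (c + d)`, where `d = ‖g_k‖²` and `c` is `ς`
plus the earlier squared norms. Since `1 - 1/x ≤ log x`, `d / (c + d) ≤ log (c + d) - log c`, and
summed in increasing order of `k` these differences of logarithms telescope. -/

open Finset

lemma div_add_le_log_add_sub_log {c d : ℝ} (hc : 0 < c) (hd : 0 ≤ d) :
    d / (c + d) ≤ Real.log (c + d) - Real.log c := by
  have hcd : 0 < c + d := by linarith
  have h := Real.one_sub_inv_le_log_of_pos (div_pos hcd hc)
  rw [Real.log_div hcd.ne' hc.ne', inv_div] at h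
  calc d / (c + d) = 1 - c / (c + d) := by field_simp; ring
    _ ≤ _ := h

lemma sum_div_cumsum_le_log_sub_log {ι : Type*} [LinearOrder ι] {c : ℝ} (hc : 0 < c)
    {f : ι → ℝ} (hf : ∀ i, 0 ≤ f i) (s : Finset ι) :
    ∑ i ∈ s, f i / (c + ∑ j ∈ s.filter (· ≤ i), f j) ≤
      Real.log (c + ∑ i ∈ s, f i) - Real.log c := by
  induction s using Finset.induction_on_max with
  | empty => simp
  | insert a s hlt ih =>
    have ha : a ∉ s := fun h => lt_irrefl a (hlt a h)
    have hfilter_a : (insert a s).filter (· ≤ a) = insert a s :=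
      filter_true_of_mem fun x hx => (mem_insert.mp hx).elim le_of_eq fun h => (hlt x h).le
    have hearlier : ∑ i ∈ s, f i / (c + ∑ j ∈ (insert a s).filter (· ≤ i), f j) =
        ∑ i ∈ s, f i / (c + ∑ j ∈ s.filter (· ≤ i), f j) := sum_congr rfl fun i hi => by
      rw [filter_insert, if_neg (not_le.mpr (hlt i hi))]
    rw [sum_insert ha, hearlier, hfilter_a, sum_insert ha,
      show c + (f a + ∑ i ∈ s, f i) = c + ∑ i ∈ s, f i + f a by ring]
    have hlast := div_add_le_log_add_sub_log (d := f a)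
      (add_pos_of_pos_of_nonneg hc (sum_nonneg fun i (_ : i ∈ s) => hf i)) (hf a)
    linarith

lemma div_mul_sqrt_sq_le {x a t S : ℝ} (hx : 0 ≤ x) (ha : 0 < a) (hat : a ≤ t) (hS : 0 < S) :
    x / (t * Real.sqrt S) ^ 2 ≤ 1 / a ^ 2 * (x / S) := by
  rw [mul_pow, Real.sq_sqrt hS.le, one_div_mul_eq_div, div_div, mul_comm S]
  gcongr

theorem stmt_8 (n : ℕ) (K : Finset ℕ) (g : ℕ → EuclideanSpace ℝ (Fin n))
    (ς θmin : ℝ) (hς : 0 < ς) (hθ : 0 < θmin)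
    (θ μ : ℕ → ℝ) (hθk : ∀ k ∈ K, θmin ≤ θ k)
    (hμ : ∀ k ∈ K, μ k = θ k * Real.sqrt (ς + ∑ j ∈ K.filter (· ≤ k), ‖g j‖ ^ 2)) :
    ∑ k ∈ K, ‖g k‖ ^ 2 / (μ k) ^ 2 ≤
      (1 / θmin ^ 2) * (Real.log (ς + ∑ k ∈ K, ‖g k‖ ^ 2) - Real.log ς) := by
  calc ∑ k ∈ K, ‖g k‖ ^ 2 / (μ k) ^ 2
      ≤ ∑ k ∈ K, 1 / θmin ^ 2 * (‖g k‖ ^ 2 / (ς + ∑ j ∈ K.filter (· ≤ k), ‖g j‖ ^ 2)) := by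
        refine sum_le_sum fun k hk => ?_
        rw [hμ k hk]
        exact div_mul_sqrt_sq_le (sq_nonneg _) hθ (hθk k hk)
          (add_pos_of_pos_of_nonneg hς (sum_nonneg fun j _ => sq_nonneg _))
    _ ≤ _ := by
        rw [← mul_sum]
        gcongr
        exact sum_div_cumsum_le_log_sub_log hς (fun k => sq_nonneg ‖g k‖) K
end

section
/- Let $(g_k)_{k \in K^+}$ be a finite family of vectors indexed by a finite set $K^+ \subseteq \mathbb{N}$, let $\varsigma > 0$, $\theta_k \le \theta_{\max}$ with $\theta_k > 0$ for each $k$, and define $\mu_k = \theta_k \sqrt{\varsigma + \sum_{j \in K^+, j \le k} \|g_j\|^2}$. Then $\sum_{k \in K^+} \frac{\|g_k\|^2}{\mu_k} \ge \frac{1}{\theta_{\max}}\left(\sqrt{\varsigma + \sum_{k \in K^+}\|g_k\|^2} - \sqrt{\varsigma}\right)$. -/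
open Finset

lemma aux_key9 (x a : ℝ) (hx : 0 < x) (ha : 0 ≤ a) (hax : a ≤ x) :
    Real.sqrt x - Real.sqrt (x - a) ≤ a / Real.sqrt x := by
  have hsx : 0 < Real.sqrt x := Real.sqrt_pos.mpr hx
  rw [le_div_iff₀ hsx]
  have h1 : Real.sqrt x * Real.sqrt x = x := Real.mul_self_sqrt hx.le
  have h2 : Real.sqrt (x - a) * Real.sqrt (x - a) = x - a :=
    Real.mul_self_sqrt (by linarith)
  have h3 : Real.sqrt (x - a) ≤ Real.sqrt x := Real.sqrt_le_sqrt (by linarith)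
  have h4 : 0 ≤ Real.sqrt (x - a) := Real.sqrt_nonneg _
  nlinarith [mul_nonneg h4 (sub_nonneg.mpr h3)]

lemma aux9 (ς θmax : ℝ) (hς : 0 < ς) (θ a : ℕ → ℝ) :
    ∀ K : Finset ℕ, (∀ k ∈ K, 0 ≤ a k) → (∀ k ∈ K, 0 < θ k ∧ θ k ≤ θmax) →
    ∑ k ∈ K, a k / (θ k * Real.sqrt (ς + ∑ j ∈ K.filter (· ≤ k), a j)) ≥
      (1 / θmax) * (Real.sqrt (ς + ∑ k ∈ K, a k) - Real.sqrt ς) := by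
  intro K
  induction K using Finset.strongInduction with
  | _ K ih =>
    intro ha hθ
    rcases K.eq_empty_or_nonempty with rfl | hK
    · simp
    · set m := K.max' hK with hm
      have hmK : m ∈ K := K.max'_mem hK
      have hθmax : 0 < θmax := lt_of_lt_of_le (hθ m hmK).1 (hθ m hmK).2
      set K' := K.erase m with hK'
      have hsub : K' ⊂ K := Finset.erase_ssubset hmK
      have ihK := ih K' hsub (fun k hk => ha k (Finset.mem_of_mem_erase hk))
        (fun k hk => hθ k (Finset.mem_of_mem_erase hk))
      have hsum : ∑ k ∈ K, a k = a m + ∑ k ∈ K', a k := (Finset.add_sum_erase K a hmK).symm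
      have hfilterm : K.filter (· ≤ m) = K := by
        apply Finset.filter_true_of_mem
        intro j hj; exact K.le_max' j hj
      have hfilter : ∀ k ∈ K', K.filter (· ≤ k) = K'.filter (· ≤ k) := by
        intro k hk
        have hkm : k < m := lt_of_le_of_ne (K.le_max' k (Finset.mem_of_mem_erase hk))
          (Finset.ne_of_mem_erase hk)
        ext j
        simp only [Finset.mem_filter, hK', Finset.mem_erase]
        constructor
        · rintro ⟨hj, hjk⟩
          exact ⟨⟨by omega, hj⟩, hjk⟩
        · rintro ⟨⟨_, hj⟩, hjk⟩; exact ⟨hj, hjk⟩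
      have hT' : 0 ≤ ∑ k ∈ K', a k :=
        Finset.sum_nonneg fun k hk => ha k (Finset.mem_of_mem_erase hk)
      have ham : 0 ≤ a m := ha m hmK
      set T := ∑ k ∈ K, a k with hT
      set T' := ∑ k ∈ K', a k with hT'def
      have hx : 0 < ς + T := by rw [hsum]; linarith
      have hsx : 0 < Real.sqrt (ς + T) := Real.sqrt_pos.mpr hx
      rw [← Finset.add_sum_erase K _ hmK, hfilterm]
      have hrw : ∑ k ∈ K', a k / (θ k * Real.sqrt (ς + ∑ j ∈ K.filter (· ≤ k), a j)) =
          ∑ k ∈ K', a k / (θ k * Real.sqrt (ς + ∑ j ∈ K'.filter (· ≤ k), a j)) := by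
        apply Finset.sum_congr rfl
        intro k hk
        rw [hfilter k hk]
      rw [hrw]
      have key : a m / (θ m * Real.sqrt (ς + T)) ≥
          (1 / θmax) * (Real.sqrt (ς + T) - Real.sqrt (ς + T')) := by
        have h1 : Real.sqrt (ς + T) - Real.sqrt (ς + T') ≤ a m / Real.sqrt (ς + T) := by
          have := aux_key9 (ς + T) (a m) hx ham (by rw [hsum]; linarith)
          have heq : ς + T - a m = ς + T' := by rw [hsum]; ring
          rwa [heq] at this
        have hθm := hθ m hmK
        have h2 : a m / (θmax * Real.sqrt (ς + T)) ≤ a m / (θ m * Real.sqrt (ς + T)) := by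
          apply div_le_div_of_nonneg_left ham (mul_pos hθm.1 hsx)
          exact mul_le_mul_of_nonneg_right hθm.2 hsx.le
        have heq : a m / (θmax * Real.sqrt (ς + T)) =
            (1 / θmax) * (a m / Real.sqrt (ς + T)) := by
          field_simp
        have h3 : (1 / θmax) * (Real.sqrt (ς + T) - Real.sqrt (ς + T')) ≤
            a m / (θmax * Real.sqrt (ς + T)) := by
          rw [heq]
          exact mul_le_mul_of_nonneg_left h1 (by positivity)
        linarith
      have hsq : Real.sqrt (ς + T') ≥ Real.sqrt ς := Real.sqrt_le_sqrt (by linarith)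
      -- combine
      have := ihK
      nlinarith [this, key]

theorem stmt_9 (n : ℕ) (K : Finset ℕ) (g : ℕ → EuclideanSpace ℝ (Fin n))
    (ς θmax : ℝ) (hς : 0 < ς)
    (θ μ : ℕ → ℝ) (hθk : ∀ k ∈ K, 0 < θ k ∧ θ k ≤ θmax)
    (hμ : ∀ k ∈ K, μ k = θ k * Real.sqrt (ς + ∑ j ∈ K.filter (· ≤ k), ‖g j‖ ^ 2)) :
    ∑ k ∈ K, ‖g k‖ ^ 2 / μ k ≥
      (1 / θmax) * (Real.sqrt (ς + ∑ k ∈ K, ‖g k‖ ^ 2) - Real.sqrt ς) := by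
  have := aux9 ς θmax hς θ (fun k => ‖g k‖ ^ 2) K (fun k _ => by positivity) hθk
  calc ∑ k ∈ K, ‖g k‖ ^ 2 / μ k
      = ∑ k ∈ K, ‖g k‖ ^ 2 / (θ k * Real.sqrt (ς + ∑ j ∈ K.filter (· ≤ k), ‖g j‖ ^ 2)) := by
        exact Finset.sum_congr rfl fun k hk => by rw [hμ k hk]
    _ ≥ _ := this
end
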